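/- arXiv:1912.02631 — 2 statements merged into one kernel-verified Lean document; each statement's English description precedes it below -/
import Mathlib

section
/- Bit injection identity: for a bit b with Boolean sharing b = m_b ⊕ λ_b and a ring value v = m_v - λ_v in ℤ/2^ℓ, letting m_b', λ_b' ∈ {0,1} ⊂ ℤ/2^ℓ be the ring embeddings of m_b and λ_b, the ring embedding of b times v equals m_b' m_v - m_b' λ_v + (m_v - 2 m_v m_b') λ_b' + (2 m_b' - 1) (λ_b' λ_v). -/
def embBool (n : ℕ) (b : Bool) : ZMod n := if b then 1 else 0

theorem bit_injection_identity (ℓ : ℕ) (hℓ : 2 ≤ ℓ) (mb lb : Bool)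
    (mv lv v : ZMod (2^ℓ)) (hv : v = mv - lv) :
    embBool (2^ℓ) (Bool.xor mb lb) * v =
      embBool (2^ℓ) mb * mv - embBool (2^ℓ) mb * lv
        + (mv - 2 * mv * embBool (2^ℓ) mb) * embBool (2^ℓ) lb
        + (2 * embBool (2^ℓ) mb - 1) * (embBool (2^ℓ) lb * lv) := by
  subst hv
  cases mb <;> cases lb <;> simp [embBool] <;> ring
end

section
/- Truncation via mask: for any z, r ∈ ℤ, if z - r is truncated by d bits (integer division by 2^d, denoted t(·)) and r^t = t(r), then 2^d·(t(z - r) + r^t) differs from z by at most 2^{d+1} - 2; in particular t(z - r) + r^t ∈ {t(z) - 1, t(z), t(z) + 1} when t denotes floor division by 2^d over the integers. -/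
namespace Int

variable {m : ℤ}

theorem mul_fdiv_add_mul_fdiv (x y m : ℤ) :
    m * (x.fdiv m + y.fdiv m) = x + y - (x.fmod m + y.fmod m) := by
  linarith [mul_fdiv_add_fmod x m, mul_fdiv_add_fmod y m]

theorem abs_mul_fdiv_add_fdiv_sub_le (hm : 0 < m) (x y : ℤ) :
    |m * (x.fdiv m + y.fdiv m) - (x + y)| ≤ 2 * m - 2 := by
  have hx := fmod_nonneg_of_pos x hm
  have hy := fmod_nonneg_of_pos y hm
  have hx' := fmod_lt_of_pos x hm
  have hy' := fmod_lt_of_pos y hm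
  rw [mul_fdiv_add_mul_fdiv, sub_sub_cancel_left, abs_neg, abs_of_nonneg (by omega)]
  omega

/-- Adding the floors loses at most the carry of the two remainders. -/
theorem fdiv_add_fdiv_mem (hm : 0 < m) (x y : ℤ) :
    x.fdiv m + y.fdiv m ∈ ({(x + y).fdiv m - 1, (x + y).fdiv m} : Set ℤ) := by
  have carry : m * ((x + y).fdiv m - (x.fdiv m + y.fdiv m)) =
      x.fmod m + y.fmod m - (x + y).fmod m := by
    linarith [mul_fdiv_add_mul_fdiv x y m, mul_fdiv_add_fmod (x + y) m]
  have lower : m * -1 < m * ((x + y).fdiv m - (x.fdiv m + y.fdiv m)) := by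
    rw [carry, mul_neg_one]
    linarith [fmod_nonneg_of_pos x hm, fmod_nonneg_of_pos y hm, fmod_lt_of_pos (x + y) hm]
  have upper : m * ((x + y).fdiv m - (x.fdiv m + y.fdiv m)) < m * 2 := by
    rw [carry]
    linarith [fmod_lt_of_pos x hm, fmod_lt_of_pos y hm, fmod_nonneg_of_pos (x + y) hm]
  have carry_pos := lt_of_mul_lt_mul_left lower hm.le
  have carry_lt_two := lt_of_mul_lt_mul_left upper hm.le
  simp only [Set.mem_insert_iff, Set.mem_singleton_iff]
  omega

end Int

theorem truncation_via_mask (d : ℕ) (z r : ℤ) :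
    |2^d * (Int.fdiv (z - r) (2^d) + Int.fdiv r (2^d)) - z| ≤ 2^(d+1) - 2 ∧
    (Int.fdiv (z - r) (2^d) + Int.fdiv r (2^d)) ∈
      ({Int.fdiv z (2^d) - 1, Int.fdiv z (2^d), Int.fdiv z (2^d) + 1} : Set ℤ) := by
  have hpos : (0 : ℤ) < 2 ^ d := by positivity
  have bound := Int.abs_mul_fdiv_add_fdiv_sub_le hpos (z - r) r
  have carry := Int.fdiv_add_fdiv_mem hpos (z - r) r
  rw [sub_add_cancel] at bound carry
  refine ⟨by rwa [pow_succ, mul_comm _ 2], ?_⟩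
  simp only [Set.mem_insert_iff, Set.mem_singleton_iff] at carry ⊢
  tauto
end
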